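/- arXiv:1703.06045 — 4 statements merged into one kernel-verified Lean document; each statement's English description precedes it below -/
import Mathlib

section
/- Let G be a simple graph on vertex set Fin n with n ≥ 1, let n_i denote the degree of vertex i, and let c = Σ_{i} 2^{n − n_i − 1}. For i, j ∈ Fin n and b : Bool define p_{ij}(b) ∈ ℝ by: p_{ii}(true) = 1 and p_{ii}(false) = 0; if j is adjacent to i then p_{ij}(true) = 0 and p_{ij}(false) = 1; otherwise p_{ij}(b) = 1/2. Define S(x) = (1/c) · Σ_{i} 2^{n − n_i − 1} · Π_{j} p_{ij}(x j) for x : Fin n → Bool. Then for every configuration x, c · S(x) = |I(x)|, where I(x) = { i : x i = true and for every j adjacent to i, x j = false }. -/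
/-- The leaf distribution `p_{ij}` from the independent-set reduction:
`p_{ii}(true) = 1`, `p_{ii}(false) = 0`; if `j` is adjacent to `i` then
`p_{ij}(true) = 0`, `p_{ij}(false) = 1`; otherwise `p_{ij} ≡ 1/2`. -/
noncomputable def pfun {n : ℕ} (G : SimpleGraph (Fin n)) [DecidableRel G.Adj]
    (i j : Fin n) (b : Bool) : ℝ :=
  if j = i then (if b then 1 else 0)
  else if G.Adj i j then (if b then 0 else 1)
  else 1 / 2

/-- The normalizing constant `c = Σ_i 2^(n - n_i - 1)` where `n_i` is the degree of `i`. -/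
noncomputable def cval {n : ℕ} (G : SimpleGraph (Fin n)) [DecidableRel G.Adj] : ℝ :=
  ∑ i, (2 : ℝ) ^ (n - G.degree i - 1)

/-- The SPN value `S(x) = (1/c) · Σ_i 2^(n - n_i - 1) · Π_j p_{ij}(x j)`. -/
noncomputable def Sval {n : ℕ} (G : SimpleGraph (Fin n)) [DecidableRel G.Adj]
    (x : Fin n → Bool) : ℝ :=
  (1 / cval G) * ∑ i, (2 : ℝ) ^ (n - G.degree i - 1) * ∏ j, pfun G i j (x j)

/-!
The `i`-th summand of `c · S(x)` is the indicator of `i ∈ I(x)`. If `x i = false`, or some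
neighbour `j` of `i` has `x j = true`, the factor `p_{ii}` resp. `p_{ij}` vanishes. Otherwise
the factors at `i` and at its `n_i` neighbours are `1`, and the remaining `n - n_i - 1`
factors are `1/2`, which the weight `2^(n - n_i - 1)` cancels exactly.
-/

namespace SimpleGraph

variable {n : ℕ} (G : SimpleGraph (Fin n)) [DecidableRel G.Adj] {x : Fin n → Bool} {i : Fin n}

theorem cval_pos [NeZero n] : 0 < cval G :=
  Finset.sum_pos (fun _ _ => by positivity) Finset.univ_nonempty

theorem card_compl_insert_neighborFinset :
    (insert i (G.neighborFinset i))ᶜ.card = n - G.degree i - 1 := by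
  rw [Finset.card_compl, Fintype.card_fin, Finset.card_insert_of_notMem (by simp),
    card_neighborFinset_eq_degree, Nat.sub_sub]

theorem prod_pfun_eq_zero (h : ¬(x i = true ∧ ∀ j, G.Adj i j → x j = false)) :
    ∏ j, pfun G i j (x j) = 0 := by
  rw [not_and_or, Bool.not_eq_true, not_forall] at h
  rcases h with hi | ⟨j, hj⟩
  · exact Finset.prod_eq_zero (Finset.mem_univ i) (by simp [pfun, hi])
  · obtain ⟨hadj, hxj⟩ : G.Adj i j ∧ x j = true := by simpa using hj
    exact Finset.prod_eq_zero (Finset.mem_univ j) (by simp [pfun, hadj.ne', hadj, hxj])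

theorem prod_pfun_eq_half_pow (hi : x i = true) (hnbr : ∀ j, G.Adj i j → x j = false) :
    ∏ j, pfun G i j (x j) = (1 / 2) ^ (n - G.degree i - 1) := by
  set A := insert i (G.neighborFinset i)
  have h_one : ∀ j ∈ A, pfun G i j (x j) = 1 := by
    intro j hj
    rcases Finset.mem_insert.1 hj with rfl | hadj
    · simp [pfun, hi]
    · rw [mem_neighborFinset] at hadj
      simp [pfun, hadj.ne', hadj, hnbr j hadj]
  have h_half : ∀ j ∈ Aᶜ, pfun G i j (x j) = 1 / 2 := by
    intro j hj
    have hji : j ≠ i := fun h => Finset.mem_compl.1 hj (h ▸ Finset.mem_insert_self _ _)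
    have hadj : ¬G.Adj i j := fun h => Finset.mem_compl.1 hj
      (Finset.mem_insert_of_mem ((G.mem_neighborFinset i j).2 h))
    simp [pfun, hji, hadj]
  rw [← Finset.prod_mul_prod_compl A, Finset.prod_eq_one h_one, one_mul,
    Finset.prod_congr rfl h_half, Finset.prod_const, card_compl_insert_neighborFinset]

theorem weight_mul_prod_pfun :
    (2 : ℝ) ^ (n - G.degree i - 1) * ∏ j, pfun G i j (x j) =
      if x i = true ∧ ∀ j, G.Adj i j → x j = false then 1 else 0 := by
  split_ifs with h
  · rw [G.prod_pfun_eq_half_pow h.1 h.2, ← mul_pow]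
    norm_num
  · rw [G.prod_pfun_eq_zero h, mul_zero]

end SimpleGraph

theorem stmt2_general {n : ℕ} (G : SimpleGraph (Fin n)) [DecidableRel G.Adj]
    (x : Fin n → Bool) :
    cval G * Sval G x =
      (({i : Fin n | x i = true ∧ ∀ j, G.Adj i j → x j = false} : Set (Fin n)).ncard : ℝ) := by
  obtain rfl | hn := n.eq_zero_or_pos
  · simp [cval, Sval, Set.eq_empty_of_isEmpty]
  have : NeZero n := ⟨hn.ne'⟩
  rw [Sval, ← mul_assoc, mul_one_div_cancel (G.cval_pos).ne', one_mul]
  simp_rw [G.weight_mul_prod_pfun]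
  rw [Finset.sum_boole, ← Set.ncard_coe_finset, Finset.coe_filter_univ]

/-- For every configuration `x`, `c · S(x) = |I(x)|`, where
`I(x) = {i | x i = true ∧ ∀ j adjacent to i, x j = false}`. -/
theorem stmt2 {n : ℕ} (hn : 1 ≤ n) (G : SimpleGraph (Fin n)) [DecidableRel G.Adj]
    (x : Fin n → Bool) :
    cval G * Sval G x =
      (({i : Fin n | x i = true ∧ ∀ j, G.Adj i j → x j = false} : Set (Fin n)).ncard : ℝ) :=
  stmt2_general G x
end

section
/- Let G be a simple graph on vertex set Fin n with n ≥ 1, let n_i denote the degree of vertex i, let c = Σ_{i} 2^{n − n_i − 1}, and let S(x) = (1/c) · Σ_{i} 2^{n − n_i − 1} · Π_{j} p_{ij}(x j) with p_{ij} as follows: p_{ii}(true) = 1, p_{ii}(false) = 0; p_{ij}(true) = 0, p_{ij}(false) = 1 if j is adjacent to i; p_{ij} ≡ 1/2 otherwise. Then for every natural number v, G has an independent set of cardinality at least v if and only if max over x : Fin n → Bool of S(x) is at least v/c; moreover, c · max_x S(x) equals the independence number of G. -/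
/-!
For fixed `x`, the `i`-th summand `2^(n - n_i - 1) · ∏_j p_{ij}(x j)` of `c · S(x)` is `1` when
`x` selects `i` and deselects all its neighbours (each of the `n - n_i - 1` remaining vertices
contributes a factor `1/2`), and `0` otherwise. So `c · S(x)` counts the selected vertices without
a selected neighbour; these form an independent set, and for the indicator of an independent set
every one of its vertices is counted. Hence `c · max_x S(x)` is the independence number.
-/

open scoped Finset

open SimpleGraph

namespace SimpleGraph

section IndepNum

variable {α : Type*} {G : SimpleGraph α}

lemma isIndepSet_iff_forall_not_adj {s : Set α} :
    G.IsIndepSet s ↔ ∀ i ∈ s, ∀ j ∈ s, ¬ G.Adj i j :=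
  ⟨fun h _ hi _ hj hij => h hi hj hij.ne hij, fun h _ hi _ hj _ => h _ hi _ hj⟩

lemma exists_isIndepSet_ncard_eq_indepNum :
    ∃ s : Set α, G.IsIndepSet s ∧ s.ncard = G.indepNum :=
  let ⟨t, ht⟩ := G.exists_isNIndepSet_indepNum
  ⟨t, ht.isIndepSet, (Set.ncard_coe_finset t).trans ht.card_eq⟩

variable [Finite α]

lemma IsIndepSet.ncard_le_indepNum {s : Set α} (hs : G.IsIndepSet s) : s.ncard ≤ G.indepNum := by
  rw [Set.ncard_eq_toFinset_card s s.toFinite]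
  exact IsIndepSet.card_le_indepNum (by rwa [Set.Finite.coe_toFinset])

lemma exists_isIndepSet_le_ncard_iff {v : ℕ} :
    (∃ s : Set α, G.IsIndepSet s ∧ v ≤ s.ncard) ↔ v ≤ G.indepNum := by
  refine ⟨fun ⟨s, hs, hv⟩ => hv.trans hs.ncard_le_indepNum, fun hv => ?_⟩
  obtain ⟨s, hs, hcard⟩ := G.exists_isIndepSet_ncard_eq_indepNum
  exact ⟨s, hs, hcard ▸ hv⟩

lemma iSup_isIndepSet_ncard : ⨆ s ∈ {s : Set α | G.IsIndepSet s}, s.ncard = G.indepNum := by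
  have hbdd : BddAbove (Set.range fun s : Set α => ⨆ _ : G.IsIndepSet s, s.ncard) :=
    ⟨G.indepNum, by
      rintro _ ⟨s, rfl⟩
      exact ciSup_le' fun hs => hs.ncard_le_indepNum⟩
  obtain ⟨s, hs, hcard⟩ := G.exists_isIndepSet_ncard_eq_indepNum
  refine le_antisymm (ciSup_le' fun s => ciSup_le' fun hs => hs.ncard_le_indepNum) ?_
  rw [← hcard]
  exact le_ciSup_of_le hbdd s (le_ciSup_of_le (Set.finite_range _).bddAbove hs le_rfl)

end IndepNum

variable {n : ℕ} (G : SimpleGraph (Fin n)) [DecidableRel G.Adj]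

def isolatedSupport (x : Fin n → Bool) : Finset (Fin n) :=
  {i | x i = true ∧ ∀ j, G.Adj i j → x j = false}

variable {G}

lemma isIndepSet_isolatedSupport (x : Fin n → Bool) :
    G.IsIndepSet (G.isolatedSupport x : Set (Fin n)) := by
  refine isIndepSet_iff_forall_not_adj.2 fun i hi j hj hij => ?_
  simp only [isolatedSupport, Finset.coe_filter_univ, Set.mem_ofPred_eq] at hi hj
  simp [hi.2 j hij] at hj

lemma IsIndepSet.subset_isolatedSupport_indicator {s : Finset (Fin n)} (hs : G.IsIndepSet s) :
    s ⊆ G.isolatedSupport fun j => decide (j ∈ s) := by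
  intro i hi
  simp only [isolatedSupport, Finset.mem_filter_univ, decide_eq_true_eq, decide_eq_false_iff_not]
  exact ⟨hi, fun j hij hj => isIndepSet_iff_forall_not_adj.1 hs i hi j hj hij⟩

lemma card_isolatedSupport_le_indepNum (x : Fin n → Bool) :
    #(G.isolatedSupport x) ≤ G.indepNum :=
  (isIndepSet_isolatedSupport x).card_le_indepNum

lemma exists_card_isolatedSupport_eq_indepNum : ∃ x, #(G.isolatedSupport x) = G.indepNum := by
  obtain ⟨t, ht⟩ := G.exists_isNIndepSet_indepNum
  refine ⟨fun j => decide (j ∈ t), (card_isolatedSupport_le_indepNum _).antisymm ?_⟩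
  exact ht.card_eq ▸ Finset.card_le_card ht.isIndepSet.subset_isolatedSupport_indicator

end SimpleGraph

section

variable {n : ℕ} {G : SimpleGraph (Fin n)} [DecidableRel G.Adj]

lemma prod_pfun_eq_zero {x : Fin n → Bool} {i : Fin n} (hi : i ∉ G.isolatedSupport x) :
    ∏ j, pfun G i j (x j) = 0 := by
  simp only [isolatedSupport, Finset.mem_filter_univ, not_and, not_forall, Bool.not_eq_false,
    exists_prop] at hi
  by_cases hxi : x i = true
  · obtain ⟨j, hij, hxj⟩ := hi hxi
    exact Finset.prod_eq_zero_iff.2 ⟨j, Finset.mem_univ j, by simp [pfun, hij.ne', hij, hxj]⟩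
  · exact Finset.prod_eq_zero_iff.2 ⟨i, Finset.mem_univ i, by simp [pfun, hxi]⟩

lemma prod_pfun_eq_pow {x : Fin n → Bool} {i : Fin n} (hi : i ∈ G.isolatedSupport x) :
    ∏ j, pfun G i j (x j) = (1 / 2 : ℝ) ^ (n - G.degree i - 1) := by
  simp only [isolatedSupport, Finset.mem_filter_univ] at hi
  have hfactor : ∀ j, pfun G i j (x j) = if Gᶜ.Adj i j then 1 / 2 else 1 := by
    intro j
    by_cases hji : j = i
    · subst hji; simp [pfun, hi.1]
    · by_cases hij : G.Adj i j
      · simp [pfun, hji, hij, hi.2 j hij]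
      · simp [pfun, hji, hij, Ne.symm hji]
  rw [Finset.prod_congr rfl fun j _ => hfactor j, Finset.prod_ite, Finset.prod_const,
    Finset.prod_const_one, mul_one, ← neighborFinset_eq_filter, card_neighborFinset_eq_degree,
    degree_compl, Fintype.card_fin, Nat.sub_right_comm]

lemma two_pow_mul_prod_pfun (x : Fin n → Bool) (i : Fin n) :
    (2 : ℝ) ^ (n - G.degree i - 1) * ∏ j, pfun G i j (x j) =
      if i ∈ G.isolatedSupport x then 1 else 0 := by
  split_ifs with hi
  · rw [prod_pfun_eq_pow hi, ← mul_pow]; norm_num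
  · rw [prod_pfun_eq_zero hi, mul_zero]

lemma Sval_eq_card_div (x : Fin n → Bool) :
    Sval G x = #(G.isolatedSupport x) / cval G := by
  simp only [Sval, two_pow_mul_prod_pfun, Finset.sum_boole, Finset.filter_mem_eq_inter,
    Finset.univ_inter, one_div_mul_eq_div]

lemma cval_pos (hn : 0 < n) : 0 < cval G :=
  Finset.sum_pos (fun _ _ => by positivity) ⟨⟨0, hn⟩, Finset.mem_univ _⟩

lemma iSup_Sval_eq (hn : 0 < n) : ⨆ x, Sval G x = G.indepNum / cval G := by
  obtain ⟨x₀, hx₀⟩ := G.exists_card_isolatedSupport_eq_indepNum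
  refine le_antisymm (ciSup_le fun x => ?_) ?_
  · rw [Sval_eq_card_div]
    gcongr
    · exact (cval_pos hn).le
    · exact card_isolatedSupport_le_indepNum x
  · rw [← hx₀, ← Sval_eq_card_div]
    exact le_ciSup (Set.finite_range _).bddAbove x₀

end

/-- `G` has an independent set of cardinality at least `v` iff
`max_x S(x) ≥ v/c`; moreover `c · max_x S(x)` equals the independence number of `G`. -/
theorem stmt3 {n : ℕ} (hn : 1 ≤ n) (G : SimpleGraph (Fin n)) [DecidableRel G.Adj] :
    (∀ v : ℕ,
      (∃ s : Set (Fin n), (∀ i ∈ s, ∀ j ∈ s, ¬ G.Adj i j) ∧ v ≤ s.ncard) ↔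
        (v : ℝ) / cval G ≤ ⨆ x : Fin n → Bool, Sval G x) ∧
    cval G * (⨆ x : Fin n → Bool, Sval G x) =
      ((⨆ s ∈ {s : Set (Fin n) | ∀ i ∈ s, ∀ j ∈ s, ¬ G.Adj i j}, s.ncard : ℕ) : ℝ) := by
  have hc : 0 < cval G := cval_pos hn
  simp only [← isIndepSet_iff_forall_not_adj]
  rw [iSup_Sval_eq hn, iSup_isIndepSet_ncard, mul_div_cancel₀ _ hc.ne']
  refine ⟨fun v => ?_, rfl⟩
  rw [exists_isIndepSet_le_ncard_iff, div_le_div_iff_of_pos_right hc, Nat.cast_le]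
end

section
/- Let m ≥ 2 and s' ≥ 1 be integers and 0 ≤ ε < 1 a real number, and set q = 1 + ⌊(ln 2 · m · (s'+2)^ε)^{1/(1−ε)}⌋ (a positive integer). Then for every real s with 0 ≤ s ≤ q·(s'+2), we have 2^{s^ε} · ((m−1)/m)^q < 1; equivalently, (m/(m−1))^q > 2^{s^ε}. -/
/-!
Write `A = ln 2 · m · (s'+2)^ε`. Since `q > A^(1/(1-ε))`, we get `q^(1-ε) > A`, i.e. `A · q^ε < q`.
Hence `s^ε · ln 2 ≤ (q (s'+2))^ε · ln 2 = A q^ε / m < q / m ≤ q · ln (m/(m-1))`, the last step being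
`ln (1 - 1/m) ≤ -1/m`; exponentiating gives `2^(s^ε) < (m/(m-1))^q`.
-/

open Real

lemma inv_le_log_div_sub_one {x : ℝ} (hx : 1 < x) : x⁻¹ ≤ log (x / (x - 1)) := by
  have key := one_sub_inv_le_log_of_pos (x := x / (x - 1)) (by apply div_pos <;> linarith)
  have hx0 : x ≠ 0 := by positivity
  have hx1 : x - 1 ≠ 0 := by linarith
  calc x⁻¹ = 1 - (x / (x - 1))⁻¹ := by field_simp; ring
    _ ≤ log (x / (x - 1)) := key

lemma mul_rpow_lt_of_rpow_one_div_one_sub_lt {A q ε : ℝ} (hA : 0 ≤ A) (hq : 0 < q) (hε : ε < 1)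
    (h : A ^ (1 / (1 - ε)) < q) : A * q ^ ε < q := by
  rw [one_div, rpow_inv_lt_iff_of_pos hA hq.le (by linarith)] at h
  calc A * q ^ ε < q ^ (1 - ε) * q ^ ε := by gcongr
    _ = q := by rw [← rpow_add hq]; norm_num

lemma rpow_lt_pow_of_mul_log_lt {a b t : ℝ} {n : ℕ} (ha : 0 < a) (hb : 0 < b)
    (h : t * log a < n * log b) : a ^ t < b ^ n := by
  rw [← rpow_natCast, rpow_def_of_pos ha, rpow_def_of_pos hb, exp_lt_exp]
  linarith

theorem stmt10_general (m s' : ℕ) (hm : 2 ≤ m) (ε : ℝ) (hε0 : 0 ≤ ε) (hε1 : ε < 1)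
    (q : ℕ)
    (hq : q = 1 + ⌊(Real.log 2 * (m : ℝ) * ((s' : ℝ) + 2) ^ ε) ^ (1 / (1 - ε))⌋₊)
    (s : ℝ) (hs0 : 0 ≤ s) (hs : s ≤ (q : ℝ) * ((s' : ℝ) + 2)) :
    (2 : ℝ) ^ (s ^ ε) * (((m : ℝ) - 1) / (m : ℝ)) ^ q < 1 ∧
      (2 : ℝ) ^ (s ^ ε) < ((m : ℝ) / ((m : ℝ) - 1)) ^ q := by
  have hm1 : (1 : ℝ) < m := by exact_mod_cast hm
  have hq0 : (0 : ℝ) < q := by rw [hq]; positivity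
  set A := log 2 * (m : ℝ) * ((s' : ℝ) + 2) ^ ε
  have hqA : A ^ (1 / (1 - ε)) < q := by
    rw [hq]; push_cast; linarith [Nat.lt_floor_add_one (A ^ (1 / (1 - ε)))]
  have hAq : A * (q : ℝ) ^ ε < q :=
    mul_rpow_lt_of_rpow_one_div_one_sub_lt (by positivity) hq0 hε1 hqA
  have hexp : s ^ ε * log 2 < q * log (m / (m - 1)) :=
    calc s ^ ε * log 2 ≤ ((q : ℝ) * ((s' : ℝ) + 2)) ^ ε * log 2 := by gcongr
      _ = A * (q : ℝ) ^ ε / m := by rw [mul_rpow (by positivity) (by positivity)]; field_simp; ring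
      _ < q / m := by gcongr
      _ ≤ q * log (m / (m - 1)) := by
        rw [div_eq_mul_inv]; gcongr; exact inv_le_log_div_sub_one hm1
  have hlt := rpow_lt_pow_of_mul_log_lt two_pos (by apply div_pos <;> linarith) hexp
  refine ⟨?_, hlt⟩
  rw [← inv_div, inv_pow, ← div_eq_mul_inv, div_lt_one (by positivity)]
  exact hlt

/-- Let `m ≥ 2`, `s' ≥ 1` be integers, `0 ≤ ε < 1` real, and
`q = 1 + ⌊(ln 2 · m · (s'+2)^ε)^(1/(1−ε))⌋`. Then for every real `0 ≤ s ≤ q·(s'+2)`,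
`2^(s^ε) · ((m−1)/m)^q < 1`; equivalently `(m/(m−1))^q > 2^(s^ε)`. -/
theorem stmt10 (m s' : ℕ) (hm : 2 ≤ m) (hs' : 1 ≤ s') (ε : ℝ) (hε0 : 0 ≤ ε) (hε1 : ε < 1)
    (q : ℕ)
    (hq : q = 1 + ⌊(Real.log 2 * (m : ℝ) * ((s' : ℝ) + 2) ^ ε) ^ (1 / (1 - ε))⌋₊)
    (s : ℝ) (hs0 : 0 ≤ s) (hs : s ≤ (q : ℝ) * ((s' : ℝ) + 2)) :
    (2 : ℝ) ^ (s ^ ε) * (((m : ℝ) - 1) / (m : ℝ)) ^ q < 1 ∧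
      (2 : ℝ) ^ (s ^ ε) < ((m : ℝ) / ((m : ℝ) - 1)) ^ q :=
  stmt10_general m s' hm ε hε0 hε1 q hq s hs0 hs
end

section
/- Fix a finite index set ι and for each i ∈ ι a finite nonempty type α i, and consider SPNs over ι as defined inductively (Leaf, Sum with convex weights, Prod over disjoint scopes). If S is an SPN whose scope is all of ι and such that every leaf function p occurring in S satisfies Σ_{v : α i} p v = 1, then Σ over all configurations x : ∀ i, α i of S(x) equals 1. -/
open scoped NNReal

/-- Sum-product networks over index set `ι` with variable domains `α i`, indexed by scope. -/
inductive SPN (ι : Type) (α : ι → Type) : Set ι → Type where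
  | leaf (i : ι) (p : α i → ℝ≥0) : SPN ι α {i}
  | sum {sc : Set ι} (t : ℕ) (ht : 1 ≤ t) (child : Fin t → SPN ι α sc)
      (w : Fin t → ℝ≥0) (hw : ∑ j, w j = 1) : SPN ι α sc
  | prod (t : ℕ) (scs : Fin t → Set ι)
      (hd : Pairwise fun j k => Disjoint (scs j) (scs k))
      (child : ∀ j, SPN ι α (scs j)) : SPN ι α (⋃ j, scs j)

/-- The value of an SPN at a configuration. -/
noncomputable def SPN.eval {ι : Type} {α : ι → Type} :
    {sc : Set ι} → SPN ι α sc → (∀ i, α i) → ℝ≥0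
  | _, .leaf i p, x => p (x i)
  | _, .sum _ _ child w _, x => ∑ j, w j * (child j).eval x
  | _, .prod _ _ _ child, x => ∏ j, (child j).eval x


/-- Every leaf distribution occurring in the SPN is normalized. -/
def SPN.normalized {ι : Type} {α : ι → Type} [∀ i, Fintype (α i)] :
    {sc : Set ι} → SPN ι α sc → Prop
  | _, .leaf i p => ∑ v, p v = 1
  | _, .sum _ _ child _ _ => ∀ j, (child j).normalized
  | _, .prod _ _ _ child => ∀ j, (child j).normalized

/-!
On a configuration of its own scope an SPN can be evaluated without looking at any other
variable (`SPN.evalOn`), and summing over such configurations gives `1` by induction: a sum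
node is a convex combination of children that each sum to `1`, and a product node has
pairwise disjoint child scopes, so a configuration of its scope is exactly an independent
choice of a configuration for each child and the sum of the product is the product of the
sums. For the scope `Set.univ` these configurations are the full ones.
-/

noncomputable def Equiv.piiUnionOfDisjoint {ι κ : Type*} {β : ι → Type*} {t : κ → Set ι}
    (h : Pairwise fun j k => Disjoint (t j) (t k)) : (∀ i : ⋃ j, t j, β i) ≃ ∀ j (i : t j), β i :=
  (Equiv.piCongrLeft' (fun i : ⋃ j, t j => β i) (Set.unionEqSigmaOfDisjoint h)).trans
    (Equiv.piCurry fun j (i : t j) => β i)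

namespace SPN

variable {ι : Type} {α : ι → Type}

noncomputable def evalOn : {sc : Set ι} → SPN ι α sc → (∀ i : sc, α i) → ℝ≥0
  | _, .leaf i p, y => p (y ⟨i, rfl⟩)
  | _, .sum _ _ child w _, y => ∑ j, w j * (child j).evalOn y
  | _, .prod _ scs _ child, y =>
      ∏ j, (child j).evalOn fun i => y (Set.inclusion (Set.subset_iUnion scs j) i)

theorem eval_eq_evalOn {sc : Set ι} (S : SPN ι α sc) (x : ∀ i, α i) :
    S.eval x = S.evalOn fun i => x i := by
  induction S with
  | leaf => rfl
  | sum _ _ _ _ _ ih => simp only [eval, evalOn, ih]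
  | prod _ _ _ _ ih => simp only [eval, evalOn, ih]

theorem sum_evalOn [Fintype ι] [∀ i, Fintype (α i)] {sc : Set ι} (S : SPN ι α sc)
    (hS : S.normalized) : ∀ [Fintype (∀ i : sc, α i)], ∑ y, S.evalOn y = 1 := by
  classical
  induction S with
  | leaf i p =>
      exact (Fintype.sum_equiv (.piUnique fun j : ({i} : Set ι) => α j) _ p fun _ => rfl).trans hS
  | sum t _ child w hw ih =>
      intro _
      simp only [evalOn]
      rw [Finset.sum_comm]
      simp only [← Finset.mul_sum, ih _ (hS _), mul_one, hw]
  | prod t scs hd child ih =>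
      intro _
      calc _ = ∑ z : ∀ j (i : scs j), α i, ∏ j, (child j).evalOn (z j) :=
            Fintype.sum_equiv (Equiv.piiUnionOfDisjoint hd) _ _ fun _ => rfl
        _ = ∏ j, ∑ z, (child j).evalOn z := (Finset.prod_univ_sum _ _).symm
        _ = 1 := Finset.prod_eq_one fun j _ => ih j (hS j)

end SPN

theorem stmt11_general {ι : Type} [Fintype ι] [DecidableEq ι] {α : ι → Type}
    [∀ i, Fintype (α i)]
    (S : SPN ι α Set.univ) (hS : S.normalized) :
    ∑ x : ∀ i, α i, S.eval x = 1 :=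
  calc ∑ x, S.eval x = ∑ x : ∀ i, α i, S.evalOn fun i => x i := by
        simp only [S.eval_eq_evalOn]
    _ = ∑ y, S.evalOn y :=
        Fintype.sum_equiv (Equiv.piCongrLeft' α (Equiv.Set.univ ι).symm) _ _ fun _ => rfl
    _ = 1 := S.sum_evalOn hS

/-- If `S` is an SPN whose scope is all of `ι` and all of whose leaf
distributions are normalized, then `Σ_x S(x) = 1`. -/
theorem stmt11 {ι : Type} [Fintype ι] [DecidableEq ι] {α : ι → Type}
    [∀ i, Fintype (α i)] [∀ i, Nonempty (α i)]
    (S : SPN ι α Set.univ) (hS : S.normalized) :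
    ∑ x : ∀ i, α i, S.eval x = 1 :=
  stmt11_general S hS
end
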